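/- arXiv:0801.4627 — 3 statements merged into one kernel-verified Lean document; each statement's English description precedes it below -/
import Mathlib

section
/- Let (μₙ) be positive reals with μₙ → 0 and √n·μₙ → m < ∞, and let (θₙ) satisfy √n·θₙ → ∞. Then for every x ∈ ℝ, the finite-sample cdf F_n(x) of √n(θ̂_A - θₙ) converges to Φ(x). -/
open ProbabilityTheory Filter
open MeasureTheory Set

/-- Standard normal cdf. -/
noncomputable def Phi (x : ℝ) : ℝ := cdf (gaussianReal 0 1) x

/-- The adaptive LASSO estimator `θ̂ = ȳ (1 - μ²/ȳ²)₊`. -/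
noncomputable def alasso (μ ybar : ℝ) : ℝ := ybar * max (1 - μ ^ 2 / ybar ^ 2) 0

/-- The finite-sample cdf of `√n(θ̂_A - θ)` under `ȳ ~ N(θ, 1/n)`. -/
noncomputable def Fcdf (n : ℕ) (θ μ x : ℝ) : ℝ :=
  (gaussianReal θ ((n : NNReal))⁻¹
    {y : ℝ | Real.sqrt n * (alasso μ y - θ) ≤ x}).toReal

lemma continuousAt_Phi (x : ℝ) : ContinuousAt Phi x := by
  have hμ : (gaussianReal 0 1 : Measure ℝ) {x} = 0 :=
    gaussianReal_absolutelyContinuous 0 one_ne_zero (measure_singleton x)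
  have hsing := (cdf (gaussianReal 0 1)).measure_singleton x
  rw [measure_cdf, hμ] at hsing
  have hle : cdf (gaussianReal 0 1) x - Function.leftLim (cdf (gaussianReal 0 1)) x ≤ 0 :=
    ENNReal.ofReal_eq_zero.mp hsing.symm
  have hll : Function.leftLim (cdf (gaussianReal 0 1)) x ≤ cdf (gaussianReal 0 1) x :=
    (cdf (gaussianReal 0 1)).mono.leftLim_le le_rfl
  have heq : Function.leftLim (cdf (gaussianReal 0 1)) x = cdf (gaussianReal 0 1) x := by
    linarith
  have : ContinuousAt (cdf (gaussianReal 0 1)) x := by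
    refine (cdf (gaussianReal 0 1)).mono.continuousAt_iff_leftLim_eq_rightLim.mpr ?_
    rw [heq, (cdf (gaussianReal 0 1)).rightLim_eq]
  exact this

lemma alasso_eq {μ y : ℝ} (hμ : 0 < μ) (hy : μ < y) : alasso μ y = y - μ ^ 2 / y := by
  have hy0 : 0 < y := hμ.trans hy
  have h1 : μ ^ 2 / y ^ 2 < 1 := by
    rw [div_lt_one (by positivity)]; nlinarith
  rw [alasso, max_eq_left (by linarith)]
  field_simp

lemma set_iff {μ t : ℝ} (hμ : 0 < μ) (ht : 0 < t) (y : ℝ) :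
    alasso μ y ≤ t ↔ y ≤ (t + Real.sqrt (t ^ 2 + 4 * μ ^ 2)) / 2 := by
  set c := (t + Real.sqrt (t ^ 2 + 4 * μ ^ 2)) / 2 with hc
  have hs : Real.sqrt (t ^ 2 + 4 * μ ^ 2) ^ 2 = t ^ 2 + 4 * μ ^ 2 :=
    Real.sq_sqrt (by positivity)
  have hsn : 0 ≤ Real.sqrt (t ^ 2 + 4 * μ ^ 2) := Real.sqrt_nonneg _
  have hsgt : 2 * μ < Real.sqrt (t ^ 2 + 4 * μ ^ 2) := by nlinarith
  have hcμ : μ < c := by rw [hc]; nlinarith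
  have hc0 : 0 < c := hμ.trans hcμ
  have hroot : c - μ ^ 2 / c = t := by
    rw [hc]; field_simp; nlinarith
  constructor
  · intro h
    by_contra hy
    push_neg at hy
    rw [alasso_eq hμ (hcμ.trans hy)] at h
    have h1 : μ ^ 2 / y ≤ μ ^ 2 / c := by gcongr
    linarith
  · intro hy
    rcases le_or_gt y μ with h1 | h1
    · rcases le_or_gt y 0 with h2 | h2
      · have : alasso μ y ≤ 0 := mul_nonpos_of_nonpos_of_nonneg h2 (le_max_right _ _)
        linarith
      · have hm : 1 - μ ^ 2 / y ^ 2 ≤ 0 := by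
          have : (1 : ℝ) ≤ μ ^ 2 / y ^ 2 := by
            rw [le_div_iff₀ (by positivity)]; nlinarith
          linarith
        rw [alasso, max_eq_right hm, mul_zero]; exact ht.le
    · rw [alasso_eq hμ h1]
      have h2 : μ ^ 2 / c ≤ μ ^ 2 / y := by gcongr; exact hμ.trans h1
      linarith

lemma gauss_Iic {n : ℕ} (hn : 0 < n) (θ c : ℝ) :
    (gaussianReal θ ((n : NNReal))⁻¹ (Iic c)).toReal = Phi (Real.sqrt n * (c - θ)) := by
  have hsn : (0 : ℝ) < Real.sqrt n := Real.sqrt_pos.mpr (by exact_mod_cast hn)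
  set s : ℝ := (Real.sqrt n)⁻¹ with hsdef
  have hs0 : 0 < s := inv_pos.mpr hsn
  have hmap : gaussianReal θ ((n : NNReal))⁻¹
      = ((gaussianReal 0 1).map (s * ·)).map (· + θ) := by
    rw [gaussianReal_map_const_mul, gaussianReal_map_add_const]
    congr 1
    · ring
    · rw [mul_one]
      ext
      push_cast
      rw [hsdef, ← Real.sqrt_inv, Real.sq_sqrt (by positivity)]
  rw [hmap, Measure.map_apply (measurable_add_const θ) measurableSet_Iic,
    preimage_add_const_Iic,
    Measure.map_apply (measurable_const_mul s) measurableSet_Iic,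
    preimage_const_mul_Iic₀ _ hs0, Phi, cdf_eq_real, measureReal_def]
  congr 2
  rw [hsdef, div_inv_eq_mul, mul_comm]

/-- conservative case with `√n θₙ → ∞`: if `μₙ → 0` and
`√n μₙ → m < ∞`, then `Fₙ(x) → Φ(x)` for every `x`. -/
theorem stmt14 (μ θ : ℕ → ℝ) (m : ℝ) (hμpos : ∀ n, 0 < μ n)
    (hμ0 : Tendsto μ atTop (nhds 0))
    (hμm : Tendsto (fun n : ℕ => Real.sqrt n * μ n) atTop (nhds m))
    (hθ : Tendsto (fun n : ℕ => Real.sqrt n * θ n) atTop atTop) :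
    ∀ x : ℝ,
      Tendsto (fun n : ℕ => Fcdf n (θ n) (μ n) x) atTop (nhds (Phi x)) := by
  intro x
  set a : ℕ → ℝ := fun n => Real.sqrt n * θ n with ha
  set b : ℕ → ℝ := fun n => Real.sqrt n * μ n with hb
  set z : ℕ → ℝ :=
    fun n => (x - a n + Real.sqrt ((a n + x) ^ 2 + 4 * b n ^ 2)) / 2 with hz
  have hev : ∀ᶠ n in atTop, 1 ≤ n ∧ 1 ≤ a n + x := by
    filter_upwards [hθ.eventually_ge_atTop (1 - x), eventually_ge_atTop 1] with n h1 h2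
    exact ⟨h2, by linarith⟩
  -- Step A: eventually Fcdf n = Phi (z n)
  have hFeq : ∀ᶠ n in atTop, Fcdf n (θ n) (μ n) x = Phi (z n) := by
    filter_upwards [hev] with n hn
    obtain ⟨hn1, hax⟩ := hn
    have hn0 : 0 < n := hn1
    have hsn : (0 : ℝ) < Real.sqrt n := Real.sqrt_pos.mpr (by exact_mod_cast hn0)
    set t : ℝ := θ n + x / Real.sqrt n with htd
    have hsnt : Real.sqrt n * t = a n + x := by
      simp only [htd, ha]
      field_simp
    have htpos : 0 < t := by nlinarith
    set c : ℝ := (t + Real.sqrt (t ^ 2 + 4 * μ n ^ 2)) / 2 with hcd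
    have hset : {y : ℝ | Real.sqrt n * (alasso (μ n) y - θ n) ≤ x} = Iic c := by
      ext y
      simp only [mem_setOf_eq, mem_Iic]
      have h1 : Real.sqrt n * (alasso (μ n) y - θ n) ≤ x
          ↔ alasso (μ n) y - θ n ≤ x / Real.sqrt n := by
        rw [← le_div_iff₀' hsn]
      rw [h1, sub_le_iff_le_add, add_comm, ← htd]
      exact set_iff (hμpos n) htpos y
    have hn2 : (Real.sqrt n : ℝ) ^ 2 = n := Real.sq_sqrt (by positivity)
    have hsqrt : Real.sqrt n * Real.sqrt (t ^ 2 + 4 * μ n ^ 2)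
        = Real.sqrt ((a n + x) ^ 2 + 4 * b n ^ 2) := by
      have hrad : ((a n + x) ^ 2 + 4 * b n ^ 2 : ℝ)
          = (n : ℝ) * (t ^ 2 + 4 * μ n ^ 2) := by
        rw [← hsnt]
        simp only [hb]
        linear_combination (t ^ 2 + 4 * μ n ^ 2) * hn2
      rw [hrad, Real.sqrt_mul (by positivity)]
    have hzc : Real.sqrt n * (c - θ n) = z n := by
      have : Real.sqrt n * (c - θ n)
          = (Real.sqrt n * t + Real.sqrt n * Real.sqrt (t ^ 2 + 4 * μ n ^ 2)) / 2
            - Real.sqrt n * θ n := by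
        rw [hcd]; ring
      rw [this, hsnt, hsqrt, hz]
      simp only [ha]
      ring
    rw [Fcdf, hset, gauss_Iic hn0, hzc]
  -- Step B: z n → x
  have hax_top : Tendsto (fun n => a n + x) atTop atTop :=
    tendsto_atTop_add_const_right _ x hθ
  have hinv : Tendsto (fun n => (a n + x)⁻¹) atTop (nhds 0) :=
    hax_top.inv_tendsto_atTop
  have hb2 : Tendsto (fun n => b n ^ 2 * (a n + x)⁻¹) atTop (nhds 0) := by
    have h1 : Tendsto (fun n => b n ^ 2) atTop (nhds (m ^ 2)) := by
      simpa [sq] using hμm.mul hμm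
    simpa using h1.mul hinv
  have hupper : Tendsto (fun n => x + b n ^ 2 * (a n + x)⁻¹) atTop (nhds x) := by
    simpa using tendsto_const_nhds.add hb2
  have hzlim : Tendsto z atTop (nhds x) := by
    refine tendsto_of_tendsto_of_tendsto_of_le_of_le' (tendsto_const_nhds : Tendsto (fun _ : ℕ => x) atTop (nhds x)) hupper ?_ ?_
    · filter_upwards [hev] with n hn
      obtain ⟨_, hax⟩ := hn
      have h1 : (a n + x) ≤ Real.sqrt ((a n + x) ^ 2 + 4 * b n ^ 2) := by
        have h2 := Real.sqrt_le_sqrt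
          (show (a n + x) ^ 2 ≤ (a n + x) ^ 2 + 4 * b n ^ 2 by nlinarith [sq_nonneg (b n)])
        rwa [Real.sqrt_sq (by linarith)] at h2
      simp only [hz]
      linarith
    · filter_upwards [hev] with n hn
      obtain ⟨_, hax⟩ := hn
      have hs0 : (0 : ℝ) < a n + x := by linarith
      have hident : (a n + x) * (2 * b n ^ 2 / (a n + x)) = 2 * b n ^ 2 := by
        field_simp
      have key : Real.sqrt ((a n + x) ^ 2 + 4 * b n ^ 2)
          ≤ (a n + x) + 2 * b n ^ 2 / (a n + x) := by
        have h2 := Real.sqrt_le_sqrt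
          (show (a n + x) ^ 2 + 4 * b n ^ 2
              ≤ ((a n + x) + 2 * b n ^ 2 / (a n + x)) ^ 2 by
            nlinarith [sq_nonneg (2 * b n ^ 2 / (a n + x)), hident])
        rwa [Real.sqrt_sq (by positivity)] at h2
      simp only [hz]
      rw [show b n ^ 2 * (a n + x)⁻¹ = b n ^ 2 / (a n + x) from
        (div_eq_mul_inv _ _).symm]
      have h3 : 2 * b n ^ 2 / (a n + x) = 2 * (b n ^ 2 / (a n + x)) := by ring
      linarith
  -- Step C: conclude
  have hcomp : Tendsto (fun n => Phi (z n)) atTop (nhds (Phi x)) :=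
    (continuousAt_Phi x).tendsto.comp hzlim
  exact hcomp.congr' (EventuallyEq.symm hFeq)
end

section
/- Let (μₙ) be positive with μₙ → 0, √n·μₙ → ∞, and let (θₙ) satisfy θₙ/μₙ → 0 and √n·θₙ → ν ∈ ℝ. Let F_n be the finite-sample cdf of √n(θ̂_A - θₙ) in the Gaussian location model. Then F_n(x) → 1(x ≥ -ν) for every x ≠ -ν, i.e., F_n converges weakly to pointmass at -ν. -/
open ProbabilityTheory MeasureTheory Filter
open scoped NNReal ENNReal

lemma alasso_eq_zero {μ y : ℝ} (h : |y| ≤ μ) : alasso μ y = 0 := by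
  rcases eq_or_ne y 0 with rfl | hy
  · simp [alasso]
  · have hy2 : 0 < y ^ 2 := by positivity
    have h2 : y ^ 2 ≤ μ ^ 2 := by
      rw [← sq_abs y]
      exact pow_le_pow_left₀ (abs_nonneg y) h 2
    have : (1 : ℝ) ≤ μ ^ 2 / y ^ 2 := (one_le_div hy2).2 h2
    have hmax : max (1 - μ ^ 2 / y ^ 2) 0 = 0 := max_eq_right (by linarith)
    simp [alasso, hmax]

/-- Standardization: the gaussian probability of `{|y| ≤ μ}`. -/
lemma gauss_abs_le (n : ℕ) (hn : 1 ≤ n) (θ μ : ℝ) :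
    gaussianReal θ ((n : NNReal))⁻¹ {y : ℝ | |y| ≤ μ} =
      gaussianReal 0 1 (Set.Icc (Real.sqrt n * (-μ - θ)) (Real.sqrt n * (μ - θ))) := by
  have hn0 : (0 : ℝ) < n := by exact_mod_cast hn
  have hs : 0 < Real.sqrt n := Real.sqrt_pos.2 hn0
  have hmap1 : (gaussianReal θ ((n : NNReal))⁻¹).map (fun y => Real.sqrt n * y) =
      gaussianReal (Real.sqrt n * θ) 1 := by
    rw [show (fun y => Real.sqrt n * y) = (Real.sqrt n * ·) from rfl,
      gaussianReal_map_const_mul]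
    congr 1
    apply NNReal.coe_injective
    push_cast
    rw [Real.sq_sqrt hn0.le]
    field_simp
  have hmap2 : ((gaussianReal θ ((n : NNReal))⁻¹).map (fun y => Real.sqrt n * y)).map
      (· + (-(Real.sqrt n * θ))) = gaussianReal 0 1 := by
    rw [hmap1, gaussianReal_map_add_const]
    simp
  have hmap3 : (gaussianReal θ ((n : NNReal))⁻¹).map
      (fun y => Real.sqrt n * y + (-(Real.sqrt n * θ))) = gaussianReal 0 1 := by
    rw [← hmap2, Measure.map_map (by fun_prop) (by fun_prop)]
    rfl
  have hpre : (fun y => Real.sqrt n * y + (-(Real.sqrt n * θ))) ⁻¹'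
      Set.Icc (Real.sqrt n * (-μ - θ)) (Real.sqrt n * (μ - θ)) = {y : ℝ | |y| ≤ μ} := by
    ext y
    simp only [Set.mem_preimage, Set.mem_Icc, Set.mem_setOf_eq, abs_le]
    constructor
    · rintro ⟨h1, h2⟩
      constructor
      · nlinarith
      · nlinarith
    · rintro ⟨h1, h2⟩
      constructor
      · nlinarith
      · nlinarith
  rw [← hpre, ← Measure.map_apply (by fun_prop) measurableSet_Icc, hmap3]

/-- Key convergence: the probability that `|ȳ| ≤ μₙ` tends to 1. -/
lemma key (μ θ : ℕ → ℝ)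
    (hμinf : Tendsto (fun n : ℕ => Real.sqrt n * μ n) atTop atTop)
    (hθν : ∃ ν : ℝ, Tendsto (fun n : ℕ => Real.sqrt n * θ n) atTop (nhds ν)) :
    Tendsto (fun n : ℕ =>
      (gaussianReal (θ n) ((n : NNReal))⁻¹ {y : ℝ | |y| ≤ μ n}).toReal) atTop (nhds 1) := by
  obtain ⟨ν, hθν⟩ := hθν
  set a : ℕ → ℝ := fun n => Real.sqrt n * (μ n - θ n) with ha_def
  set b : ℕ → ℝ := fun n => Real.sqrt n * (-μ n - θ n) with hb_def
  have ha : Tendsto a atTop atTop := by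
    have : a = fun n : ℕ => Real.sqrt n * μ n + (-(Real.sqrt n * θ n)) := by
      funext n; simp [ha_def]; ring
    rw [this]
    exact hμinf.atTop_add hθν.neg
  have hb : Tendsto b atTop atBot := by
    have : b = fun n : ℕ => -(Real.sqrt n * μ n + Real.sqrt n * θ n) := by
      funext n; simp [hb_def]; ring
    rw [this]
    exact tendsto_neg_atTop_atBot.comp (hμinf.atTop_add hθν)
  set G := gaussianReal (0 : ℝ) 1 with hG
  have hlow : ∀ᶠ n in atTop, cdf G (a n) - cdf G (b n) ≤
      (gaussianReal (θ n) ((n : NNReal))⁻¹ {y : ℝ | |y| ≤ μ n}).toReal := by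
    filter_upwards [eventually_ge_atTop 1] with n hn
    rw [gauss_abs_le n hn]
    have hsub : Set.Iic (a n) ⊆ Set.Iic (b n) ∪ Set.Icc (b n) (a n) := by
      intro z hz
      rcases le_or_gt z (b n) with h | h
      · exact Or.inl h
      · exact Or.inr ⟨h.le, hz⟩
    have hmono : G (Set.Iic (a n)) ≤ G (Set.Iic (b n)) + G (Set.Icc (b n) (a n)) :=
      le_trans (measure_mono hsub) (measure_union_le _ _)
    have h1 : (G (Set.Iic (a n))).toReal ≤
        (G (Set.Iic (b n))).toReal + (G (Set.Icc (b n) (a n))).toReal := by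
      rw [← ENNReal.toReal_add (measure_ne_top _ _) (measure_ne_top _ _)]
      exact ENNReal.toReal_mono
        (ENNReal.add_ne_top.2 ⟨measure_ne_top _ _, measure_ne_top _ _⟩) hmono
    rw [cdf_eq_real, cdf_eq_real, measureReal_def, measureReal_def]
    linarith
  have hhigh : ∀ᶠ n in atTop,
      (gaussianReal (θ n) ((n : NNReal))⁻¹ {y : ℝ | |y| ≤ μ n}).toReal ≤ 1 := by
    filter_upwards with n
    have h1 : (gaussianReal (θ n) ((n : NNReal))⁻¹) {y : ℝ | |y| ≤ μ n} ≤ 1 := prob_le_one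
    simpa using ENNReal.toReal_mono ENNReal.one_ne_top h1
  have hlim : Tendsto (fun n => cdf G (a n) - cdf G (b n))
      atTop (nhds 1) := by
    have h1 : Tendsto (fun n => cdf G (a n)) atTop (nhds 1) :=
      (tendsto_cdf_atTop G).comp ha
    have h0 : Tendsto (fun n => cdf G (b n)) atTop (nhds 0) :=
      (tendsto_cdf_atBot G).comp hb
    simpa using h1.sub h0
  exact tendsto_of_tendsto_of_tendsto_of_le_of_le' hlim tendsto_const_nhds hlow hhigh

/-- consistent case with `θₙ/μₙ → 0` and `√n θₙ → ν ∈ ℝ`: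
`Fₙ(x) → 1(x ≥ -ν)` for every `x ≠ -ν`, i.e. weak convergence to pointmass at `-ν`. -/
theorem stmt15 (μ θ : ℕ → ℝ) (ν : ℝ) (hμpos : ∀ n, 0 < μ n)
    (hμ0 : Tendsto μ atTop (nhds 0))
    (hμinf : Tendsto (fun n : ℕ => Real.sqrt n * μ n) atTop atTop)
    (hθ0 : Tendsto (fun n : ℕ => θ n / μ n) atTop (nhds 0))
    (hθν : Tendsto (fun n : ℕ => Real.sqrt n * θ n) atTop (nhds ν)) :
    ∀ x : ℝ, x ≠ -ν →
      Tendsto (fun n : ℕ => Fcdf n (θ n) (μ n) x) atTop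
        (nhds (if -ν ≤ x then 1 else 0)) := by
  intro x hx
  have hkey := key μ θ hμinf ⟨ν, hθν⟩
  have hneg : Tendsto (fun n : ℕ => -(Real.sqrt n * θ n)) atTop (nhds (-ν)) := hθν.neg
  rcases lt_or_gt_of_ne hx with hxlt | hxgt
  · -- x < -ν : limit is 0
    rw [if_neg (not_le.2 hxlt)]
    have hev : ∀ᶠ n : ℕ in atTop, x < -(Real.sqrt n * θ n) :=
      hneg.eventually (eventually_gt_nhds hxlt)
    have hub : ∀ᶠ n in atTop, Fcdf n (θ n) (μ n) x ≤
        1 - (gaussianReal (θ n) ((n : NNReal))⁻¹ {y : ℝ | |y| ≤ μ n}).toReal := by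
      filter_upwards [hev] with n hn
      have hsub : {y : ℝ | Real.sqrt n * (alasso (μ n) y - θ n) ≤ x} ⊆
          {y : ℝ | |y| ≤ μ n}ᶜ := by
        intro y hy
        simp only [Set.mem_compl_iff, Set.mem_setOf_eq] at *
        intro habs
        rw [alasso_eq_zero habs] at hy
        simp only [zero_sub, mul_neg] at hy
        linarith
      have hms : MeasurableSet {y : ℝ | |y| ≤ μ n} :=
        (isClosed_le continuous_abs continuous_const).measurableSet
      have hc : (gaussianReal (θ n) ((n : NNReal))⁻¹) ({y : ℝ | |y| ≤ μ n}ᶜ) =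
          1 - (gaussianReal (θ n) ((n : NNReal))⁻¹) {y : ℝ | |y| ≤ μ n} :=
        prob_compl_eq_one_sub hms
      calc Fcdf n (θ n) (μ n) x
          ≤ (gaussianReal (θ n) ((n : NNReal))⁻¹ ({y : ℝ | |y| ≤ μ n}ᶜ)).toReal :=
            ENNReal.toReal_mono (measure_ne_top _ _) (measure_mono hsub)
        _ = 1 - (gaussianReal (θ n) ((n : NNReal))⁻¹ {y : ℝ | |y| ≤ μ n}).toReal := by
            rw [hc, ENNReal.toReal_sub_of_le prob_le_one ENNReal.one_ne_top,
              ENNReal.toReal_one]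
    have hlb : ∀ᶠ n in atTop, (0 : ℝ) ≤ Fcdf n (θ n) (μ n) x := by
      filter_upwards with n
      exact ENNReal.toReal_nonneg
    have hlim : Tendsto (fun n : ℕ =>
        1 - (gaussianReal (θ n) ((n : NNReal))⁻¹ {y : ℝ | |y| ≤ μ n}).toReal)
        atTop (nhds 0) := by
      simpa using (tendsto_const_nhds (x := (1:ℝ))).sub hkey
    exact tendsto_of_tendsto_of_tendsto_of_le_of_le' tendsto_const_nhds hlim hlb hub
  · -- x > -ν : limit is 1
    rw [if_pos hxgt.le]
    have hev : ∀ᶠ n : ℕ in atTop, -(Real.sqrt n * θ n) < x :=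
      hneg.eventually (eventually_lt_nhds hxgt)
    have hlb : ∀ᶠ n in atTop,
        (gaussianReal (θ n) ((n : NNReal))⁻¹ {y : ℝ | |y| ≤ μ n}).toReal ≤
          Fcdf n (θ n) (μ n) x := by
      filter_upwards [hev] with n hn
      have hsub : {y : ℝ | |y| ≤ μ n} ⊆
          {y : ℝ | Real.sqrt n * (alasso (μ n) y - θ n) ≤ x} := by
        intro y hy
        simp only [Set.mem_setOf_eq] at *
        rw [alasso_eq_zero hy]
        simp only [zero_sub, mul_neg]
        linarith
      exact ENNReal.toReal_mono (measure_ne_top _ _) (measure_mono hsub)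
    have hub : ∀ᶠ n in atTop, Fcdf n (θ n) (μ n) x ≤ 1 := by
      filter_upwards with n
      have h1 : (gaussianReal (θ n) ((n : NNReal))⁻¹)
          {y : ℝ | Real.sqrt n * (alasso (μ n) y - θ n) ≤ x} ≤ 1 := prob_le_one
      simpa [Fcdf] using ENNReal.toReal_mono ENNReal.one_ne_top h1
    have hFdef : ∀ᶠ n in atTop,
        (gaussianReal (θ n) ((n : NNReal))⁻¹ {y : ℝ | |y| ≤ μ n}).toReal ≤
          Fcdf n (θ n) (μ n) x := hlb
    exact tendsto_of_tendsto_of_tendsto_of_le_of_le' hkey tendsto_const_nhds hFdef hub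
end

section
/- Let (μₙ) be positive with μₙ → 0 and √n·μₙ → ∞, and let (θₙ) satisfy θₙ/μₙ → ∞ and √n·μₙ²/θₙ → r ∈ ℝ. Then the finite-sample cdf F_n(x) of √n(θ̂_A - θₙ) converges to Φ(x + r) for every x ∈ ℝ. -/
open ProbabilityTheory Filter

lemma continuous_Phi : Continuous Phi := by
  rw [continuous_iff_continuousAt]
  intro a
  set f := cdf (gaussianReal 0 1) with hf
  have hmeas : f.measure {a} = 0 := by
    rw [hf, measure_cdf, gaussianReal_of_var_ne_zero 0 one_ne_zero,
      MeasureTheory.withDensity_apply _ (measurableSet_singleton a)]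
    exact MeasureTheory.setLIntegral_measure_zero _ _ (MeasureTheory.measure_singleton a)
  have hleft : Function.leftLim f a = f a := by
    have h1 : Function.leftLim f a ≤ f a := f.mono.leftLim_le le_rfl
    have h2 : f a - Function.leftLim f a ≤ 0 := by
      have := f.measure_singleton a
      rw [hmeas] at this
      have := ENNReal.ofReal_eq_zero.mp this.symm
      linarith
    linarith
  have hright : Function.rightLim f a = f a :=
    f.mono.continuousWithinAt_Ioi_iff_rightLim_eq.mp
      ((f.right_continuous a).mono Set.Ioi_subset_Ici_self)
  have : ContinuousAt f a :=
    f.mono.continuousAt_iff_leftLim_eq_rightLim.mpr (hleft.trans hright.symm)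
  exact this

/-- Gaussian cdf formula. -/
lemma gaussian_Iic (n : ℕ) (hn : n ≠ 0) (θ t : ℝ) :
    (gaussianReal θ ((n : NNReal))⁻¹ (Set.Iic t)).toReal
      = Phi (Real.sqrt n * (t - θ)) := by
  have hn' : (0 : ℝ) < n := by exact_mod_cast Nat.pos_of_ne_zero hn
  have hs : (0 : ℝ) < Real.sqrt n := Real.sqrt_pos.2 hn'
  set c : ℝ := (Real.sqrt n)⁻¹ with hc
  have hcpos : 0 < c := inv_pos.2 hs
  have hv : ((.mk (c ^ 2) (sq_nonneg _) : NNReal) * 1 : NNReal) = ((n : NNReal))⁻¹ := by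
    ext
    push_cast
    rw [mul_one]
    show c ^ 2 = ((n : ℝ))⁻¹
    rw [hc, inv_pow, Real.sq_sqrt hn'.le]
  have hmap : gaussianReal θ ((n : NNReal))⁻¹
      = (gaussianReal 0 1).map (fun z => c * z + θ) := by
    have h1 : (gaussianReal 0 1).map (c * ·)
        = gaussianReal 0 ((n : NNReal))⁻¹ := by
      rw [gaussianReal_map_const_mul c, mul_zero, hv]
    have h2 : ((gaussianReal 0 1).map (c * ·)).map (· + θ)
        = gaussianReal θ ((n : NNReal))⁻¹ := by
      rw [h1, gaussianReal_map_add_const θ, zero_add]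
    rw [← h2, MeasureTheory.Measure.map_map (measurable_add_const θ) (measurable_const_mul c)]
    rfl
  have hpre : (fun z => c * z + θ) ⁻¹' (Set.Iic t) = Set.Iic (Real.sqrt n * (t - θ)) := by
    ext z
    simp only [Set.mem_preimage, Set.mem_Iic]
    constructor
    · intro h
      have h' : z * c ≤ t - θ := by linarith [mul_comm c z]
      have h2 : z ≤ (t - θ) / c := (le_div_iff₀ hcpos).mpr h'
      rwa [hc, div_eq_mul_inv, inv_inv, mul_comm] at h2
    · intro h
      have h2 : z ≤ (t - θ) / c := by
        rw [hc, div_eq_mul_inv, inv_inv, mul_comm]; exact h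
      have := (le_div_iff₀ hcpos).mp h2
      nlinarith
  rw [hmap, MeasureTheory.Measure.map_apply ((measurable_const_mul c).add_const θ) measurableSet_Iic,
    hpre, Phi, cdf_eq_real, MeasureTheory.measureReal_def]

/-- Set identity for the event in the consistent regime. -/
lemma event_eq (sn m θ x : ℝ) (hsn : 0 < sn) (hm : 0 < m) (hc : m < θ + x / sn) :
    {y : ℝ | sn * (alasso m y - θ) ≤ x}
      = Set.Iic ((θ + x / sn + Real.sqrt ((θ + x / sn) ^ 2 + 4 * m ^ 2)) / 2) := by
  set c : ℝ := θ + x / sn with hcdef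
  set D : ℝ := Real.sqrt (c ^ 2 + 4 * m ^ 2) with hDdef
  have hD2 : D ^ 2 = c ^ 2 + 4 * m ^ 2 := Real.sq_sqrt (by positivity)
  have hD0 : (0:ℝ) ≤ D := Real.sqrt_nonneg _
  clear_value D
  clear_value c
  have hc0 : 0 < c := hm.trans hc
  have hDc : c < D := by nlinarith
  ext y
  simp only [Set.mem_setOf_eq, Set.mem_Iic]
  have key : sn * (alasso m y - θ) ≤ x ↔ alasso m y ≤ c := by
    constructor
    · intro h
      have h2 : alasso m y - θ ≤ x / sn :=
        (le_div_iff₀ hsn).mpr (by linarith [mul_comm sn (alasso m y - θ)])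
      linarith
    · intro h
      have h2 : alasso m y - θ ≤ x / sn := by linarith
      have := (le_div_iff₀ hsn).mp h2
      linarith [mul_comm (alasso m y - θ) sn]
  rw [key]
  constructor
  · intro h
    by_cases hy : m < y
    · -- here alasso m y = y - m^2/y
      have hy0 : 0 < y := hm.trans hy
      have hmax : max (1 - m ^ 2 / y ^ 2) 0 = 1 - m ^ 2 / y ^ 2 := by
        apply max_eq_left
        have : m ^ 2 ≤ y ^ 2 := by nlinarith
        have : m ^ 2 / y ^ 2 ≤ 1 := (div_le_one (by positivity)).mpr this
        linarith
      rw [alasso, hmax] at h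
      have h' : y ^ 2 - m ^ 2 ≤ c * y := by
        have hy2 : (0:ℝ) < y ^ 2 := by positivity
        have : y * (1 - m ^ 2 / y ^ 2) = (y ^ 2 - m ^ 2) / y := by
          field_simp
        rw [this] at h
        calc y ^ 2 - m ^ 2 = (y ^ 2 - m ^ 2) / y * y := by field_simp
        _ ≤ c * y := mul_le_mul_of_nonneg_right h hy0.le |>.trans_eq rfl
      -- want y ≤ (c + D)/2
      by_contra hcon
      push_neg at hcon
      have h1 : D < 2 * y - c := by linarith
      nlinarith
    · push_neg at hy
      nlinarith
  · intro h
    -- show alasso m y ≤ c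
    have hmax0 : (0:ℝ) ≤ max (1 - m ^ 2 / y ^ 2) 0 := le_max_right _ _
    have hmax1 : max (1 - m ^ 2 / y ^ 2) 0 ≤ 1 := by
      apply max_le _ zero_le_one
      have : (0:ℝ) ≤ m ^ 2 / y ^ 2 := by positivity
      linarith
    rcases le_or_gt y 0 with hy | hy
    · have : alasso m y ≤ 0 := mul_nonpos_of_nonpos_of_nonneg hy hmax0
      linarith
    · by_cases hym : y ≤ m
      · have : alasso m y ≤ y * 1 := mul_le_mul_of_nonneg_left hmax1 hy.le
        rw [mul_one] at this
        linarith
      · push_neg at hym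
        have hmax : max (1 - m ^ 2 / y ^ 2) 0 = 1 - m ^ 2 / y ^ 2 := by
          apply max_eq_left
          have : m ^ 2 ≤ y ^ 2 := by nlinarith
          have : m ^ 2 / y ^ 2 ≤ 1 := (div_le_one (by positivity)).mpr this
          linarith
        rw [alasso, hmax]
        have hid : y * (1 - m ^ 2 / y ^ 2) = (y ^ 2 - m ^ 2) / y := by
          field_simp
        rw [hid]
        rw [div_le_iff₀ hy]
        -- (y - (c+D)/2)(y - (c-D)/2) ≤ 0
        have h1 : 0 ≤ (c + D) / 2 - y := by linarith
        have h2 : 0 ≤ y - (c - D) / 2 := by nlinarith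
        nlinarith [mul_nonneg h1 h2]

/-- Algebraic identity for the shift. -/
lemma shift_eq (a b : ℝ) (ha : 0 < a) (hb : 0 ≤ b) :
    (Real.sqrt (a ^ 2 + 4 * b) - a) / 2
      = 2 * (b / a) / (Real.sqrt (1 + 4 * (b / a ^ 2)) + 1) := by
  set D : ℝ := Real.sqrt (a ^ 2 + 4 * b) with hDdef
  have hD2 : D ^ 2 = a ^ 2 + 4 * b := Real.sq_sqrt (by positivity)
  have hD0 : (0:ℝ) ≤ D := Real.sqrt_nonneg _
  have h1 : Real.sqrt (1 + 4 * (b / a ^ 2)) = D / a := by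
    have he : 1 + 4 * (b / a ^ 2) = (a ^ 2 + 4 * b) / a ^ 2 := by field_simp
    rw [he, Real.sqrt_div (by positivity), Real.sqrt_sq ha.le, hDdef]
  clear_value D
  have hDa : a ≤ D := by nlinarith
  rw [h1]
  have hda : 0 < D / a + 1 := by positivity
  field_simp
  nlinarith

/-- consistent case with `θₙ/μₙ → ∞` and `√n μₙ²/θₙ → r ∈ ℝ`:
`Fₙ(x) → Φ(x + r)` for every `x`. -/
theorem stmt16 (μ θ : ℕ → ℝ) (r : ℝ) (hμpos : ∀ n, 0 < μ n)
    (hμ0 : Tendsto μ atTop (nhds 0))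
    (hμinf : Tendsto (fun n : ℕ => Real.sqrt n * μ n) atTop atTop)
    (hθinf : Tendsto (fun n : ℕ => θ n / μ n) atTop atTop)
    (hr : Tendsto (fun n : ℕ => Real.sqrt n * (μ n) ^ 2 / θ n) atTop (nhds r)) :
    ∀ x : ℝ,
      Tendsto (fun n : ℕ => Fcdf n (θ n) (μ n) x) atTop (nhds (Phi (x + r))) := by
  intro x
  -- notation
  set a : ℕ → ℝ := fun n => Real.sqrt n * θ n + x with ha
  set b : ℕ → ℝ := fun n => (Real.sqrt n * μ n) ^ 2 with hb
  have hbnn : ∀ n, 0 ≤ b n := fun n => sq_nonneg _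
  -- √n θ n → ∞
  have hsθ : Tendsto (fun n : ℕ => Real.sqrt n * θ n) atTop atTop := by
    have heq : ∀ n : ℕ, Real.sqrt n * θ n = (Real.sqrt n * μ n) * (θ n / μ n) := by
      intro n
      field_simp [(hμpos n).ne']
    simpa only [heq] using hμinf.atTop_mul_atTop₀ hθinf
  have hA : Tendsto a atTop atTop := tendsto_atTop_add_const_right _ x hsθ
  -- eventually a n > 0, θ n > 0, n ≥ 1
  have hApos : ∀ᶠ n in atTop, 0 < a n := hA.eventually_gt_atTop 0
  have hθpos : ∀ᶠ n in atTop, 0 < θ n := by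
    filter_upwards [hθinf.eventually_gt_atTop 0] with n hn
    have := hμpos n
    by_contra h
    push_neg at h
    have : θ n / μ n ≤ 0 := div_nonpos_of_nonpos_of_nonneg h (hμpos n).le
    linarith
  have hn1 : ∀ᶠ n : ℕ in atTop, 0 < Real.sqrt n := by
    filter_upwards [eventually_ge_atTop 1] with n hn
    exact Real.sqrt_pos.2 (by exact_mod_cast hn)
  -- a n - √n μ n → ∞
  have hgap : Tendsto (fun n : ℕ => a n - Real.sqrt n * μ n) atTop atTop := by
    have heq : ∀ n : ℕ, a n - Real.sqrt n * μ n
        = (Real.sqrt n * μ n) * (θ n / μ n - 1) + x := by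
      intro n
      simp only [ha]
      field_simp [(hμpos n).ne']
      ring
    have := (hμinf.atTop_mul_atTop₀ (tendsto_atTop_add_const_right _ (-1 : ℝ) hθinf))
    simp only [← sub_eq_add_neg] at this
    simpa only [heq] using tendsto_atTop_add_const_right _ x this
  have hgap' : ∀ᶠ n in atTop, 0 < a n - Real.sqrt n * μ n := hgap.eventually_gt_atTop 0
  -- b n / a n → r
  have hba : Tendsto (fun n => b n / a n) atTop (nhds r) := by
    have hAinv : Tendsto (fun n => (a n)⁻¹) atTop (nhds 0) := hA.inv_tendsto_atTop
    have hx0 : Tendsto (fun n => x * (a n)⁻¹) atTop (nhds 0) := by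
      simpa using hAinv.const_mul x
    have hmain : Tendsto (fun n : ℕ => Real.sqrt n * (μ n) ^ 2 / θ n * (1 - x * (a n)⁻¹))
        atTop (nhds r) := by
      have hone : Tendsto (fun _ : ℕ => (1:ℝ)) atTop (nhds 1) := tendsto_const_nhds
      have := hr.mul (hone.sub hx0)
      simpa using this
    apply hmain.congr'
    filter_upwards [hApos, hθpos, hn1] with n hAn hθn hsn
    symm
    have hsθn : Real.sqrt n * θ n = a n - x := by simp [ha]
    show b n / a n = Real.sqrt n * (μ n) ^ 2 / θ n * (1 - x * (a n)⁻¹)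
    have h1 : b n * θ n = Real.sqrt n * (μ n) ^ 2 * (a n - x) := by
      rw [← hsθn]; simp only [hb]; ring
    field_simp
    linear_combination a n * h1
  -- b n / (a n)^2 → 0
  have hba2 : Tendsto (fun n => b n / (a n) ^ 2) atTop (nhds 0) := by
    have heq : (fun n => b n / (a n) ^ 2) = fun n => (b n / a n) * (a n)⁻¹ := by
      funext n
      rw [sq, ← div_div, div_eq_mul_inv]
    rw [heq]
    simpa using hba.mul hA.inv_tendsto_atTop
  -- the shift g n → r
  set g : ℕ → ℝ := fun n => (Real.sqrt ((a n) ^ 2 + 4 * b n) - a n) / 2 with hg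
  have hgtend : Tendsto g atTop (nhds r) := by
    have hden : Tendsto (fun n => Real.sqrt (1 + 4 * (b n / (a n) ^ 2)) + 1)
        atTop (nhds 2) := by
      have h1 : Tendsto (fun n => 1 + 4 * (b n / (a n) ^ 2)) atTop (nhds 1) := by
        have h0 := hba2.const_mul (4 : ℝ)
        have hone : Tendsto (fun _ : ℕ => (1:ℝ)) atTop (nhds 1) := tendsto_const_nhds
        have := hone.add h0
        simpa using this
      have h2 : Tendsto (fun n => Real.sqrt (1 + 4 * (b n / (a n) ^ 2))) atTop (nhds 1) := by
        have := (Real.continuous_sqrt.tendsto 1).comp h1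
        rwa [Real.sqrt_one] at this
      have hone : Tendsto (fun _ : ℕ => (1:ℝ)) atTop (nhds 1) := tendsto_const_nhds
      have := h2.add hone
      norm_num at this ⊢
      exact this
    have hnum : Tendsto (fun n => 2 * (b n / a n)) atTop (nhds (2 * r)) :=
      hba.const_mul 2
    have hdiv := hnum.div hden (by norm_num)
    have : (2 : ℝ) * r / 2 = r := by ring
    rw [this] at hdiv
    apply hdiv.congr'
    filter_upwards [hApos] with n hAn
    exact (shift_eq (a n) (b n) hAn (hbnn n)).symm
  -- Phi (x + g n) → Phi (x + r)
  have hPhi : Tendsto (fun n => Phi (x + g n)) atTop (nhds (Phi (x + r))) := by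
    have hxc : Tendsto (fun _ : ℕ => x) atTop (nhds x) := tendsto_const_nhds
    exact (continuous_Phi.tendsto (x + r)).comp (hxc.add hgtend)
  -- eventual equality Fcdf = Phi (x + g n)
  apply hPhi.congr'
  filter_upwards [hApos, hθpos, hn1, hgap', eventually_ge_atTop 1] with n hAn hθn hsn hgn hn1'
  set s : ℝ := Real.sqrt n with hs
  have hn0 : n ≠ 0 := by omega
  set c : ℝ := θ n + x / s with hc
  have hsc : s * c = a n := by
    simp only [hc, ha]
    field_simp
    rw [hs]
    ring
  have hcμ : μ n < c := by
    have h1 : s * μ n < s * c := by rw [hsc]; linarith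
    exact (mul_lt_mul_iff_right₀ hsn).mp h1
  have hset := event_eq s (μ n) (θ n) x hsn (hμpos n) hcμ
  -- value of √n * (y* - θ)
  have hargeq : s * ((c + Real.sqrt (c ^ 2 + 4 * (μ n) ^ 2)) / 2 - θ n) = x + g n := by
    have hsqrt : s * Real.sqrt (c ^ 2 + 4 * (μ n) ^ 2)
        = Real.sqrt ((a n) ^ 2 + 4 * b n) := by
      have h1 : (n : ℝ) * (c ^ 2 + 4 * (μ n) ^ 2) = (a n) ^ 2 + 4 * b n := by
        have hss : s * s = (n : ℝ) := Real.mul_self_sqrt (Nat.cast_nonneg n)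
        have : (a n) ^ 2 = (s * c) ^ 2 := by rw [hsc]
        simp only [hb]
        nlinarith [hsc]
      rw [← h1, Real.sqrt_mul (Nat.cast_nonneg n), hs]
    have hsθn : s * θ n = a n - x := by simp [ha, hs]
    simp only [hg]
    rw [mul_sub, ← mul_div_assoc, mul_add, hsc, hsqrt, hsθn]
    ring
  show Phi (x + g n) = Fcdf n (θ n) (μ n) x
  rw [Fcdf, hset, gaussian_Iic n hn0, hargeq]
end
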